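/- (Coherence Theorem.) Let D ≥ 2, let V be a complex Banach space, and let C be a real-analytic function on M_2 with values in the continuous bilinear maps V × V → V. A binary tree T on {1,…,n} is a family of subsets of {1,…,n} containing {1,…,n} and every singleton {i}, such that any two members are disjoint or nested, and every non-singleton member S is the disjoint union of exactly two members of T (its children, the maximal members of T properly contained in S). For (x_1,…,x_n) ∈ M_n and S ∈ T define recursively the |S|-multilinear map f_S: f_{{i}} := id_V, and for a non-singleton S with children S_1, S_2 with maximal elements m_1 < m_2, f_S((v_i)_{i∈S}) := C(x_{m_1}, x_{m_2})( f_{S_1}((v_i)_{i∈S_1}), f_{S_2}((v_i)_{i∈S_2}) ); set f_T(x_1,…,x_n) := f_{{1,…,n}}, an n-multilinear map V^n → V whose k-th input slot corresponds to the leaf {k}. Let D[T] ⊆ M_n be the open set of tuples such that for every non-singleton S ∈ T with children S_1, S_2 (maximal elements m_1, m_2): r_{m_1 m_2} > r_{ij} for all distinct i, j lying both in S_1 or both in S_2. Assume that for every m ≥ 2 and every binary tree T on {1,…,m}, the function f_T (real-analytic on D[T]) extends to a real-analytic function F_T on all of M_m, and assume that for m = 3 the three functions F_T associated with the three binary trees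 on {1,2,3} coincide on M_3. Then for every n ≥ 2 and every pair of binary trees T, T′ on {1,…,n}, F_T = F_{T′} on M_n. -/

import Mathlib

/-
On the open set `D[T]` the extension `F_T` is the explicit expression `f_T`, which is itself
real-analytic on all of `M_n`. Since `D[T]` meets `M_n` (cluster the two subtrees of every node
far apart on a line) and `M_n` is connected for `D ≥ 2`, the identity theorem gives `F_T = f_T`
on `M_n`. For `n = 3` the hypothesis then says that `C` is associative and that the left
multiplications `C(a, c) u` and `C(b, c) w` commute. With these two relations, every `f_T`
rewrites to the right comb `C(x_{p₁}, x_m) v_{p₁} (⋯ (C(x_{pₖ}, x_m) v_{pₖ} v_m))`, where `m` is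
the largest label and the other labels `pᵢ` may be taken in any order.
-/

noncomputable section

abbrev Pt (D : ℕ) : Type := EuclideanSpace ℝ (Fin D)

/-- Binary trees with leaves labeled by elements of `Fin n`. -/
inductive BTree (n : ℕ) : Type
  | leaf : Fin n → BTree n
  | node : BTree n → BTree n → BTree n

namespace BTree

/-- The set of leaf labels of a binary tree. -/
def leaves {n : ℕ} : BTree n → Finset (Fin n)
  | leaf i => {i}
  | node l r => leaves l ∪ leaves r

/-- The maximal leaf label of a binary tree. -/
def maxLeaf {n : ℕ} : BTree n → Fin n
  | leaf i => i
  | node l r => max (maxLeaf l) (maxLeaf r)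

/-- A tree is valid if the leaf sets of the two children of any node are disjoint and the
children are ordered by their maximal elements.  A valid tree with `leaves = univ`
corresponds exactly to a binary tree on `{1, …, n}` in the sense of nested families of
subsets, each non-singleton member being the disjoint union of its two children. -/
def Valid {n : ℕ} : BTree n → Prop
  | leaf _ => True
  | node l r => Valid l ∧ Valid r ∧ Disjoint (leaves l) (leaves r) ∧ maxLeaf l < maxLeaf r

/-- The recursively defined multilinear expression `f_T`:
`f_S = C(x_{m₁}, x_{m₂})(f_{S₁}, f_{S₂})` where `m₁ < m₂` are the maximal elements of the
children `S₁, S₂`, and `f_{{k}}(v) = v k`. -/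
def evalT {D : ℕ} {V : Type*} [NormedAddCommGroup V] [NormedSpace ℂ V] {n : ℕ}
    (C : Pt D → Pt D → (V →L[ℂ] V →L[ℂ] V)) (x : Fin n → Pt D) (v : Fin n → V) :
    BTree n → V
  | leaf i => v i
  | node l r => C (x l.maxLeaf) (x r.maxLeaf) (evalT C x v l) (evalT C x v r)

/-- The domain `D[T]`: for every node with children `S₁, S₂` (maximal elements `m₁, m₂`),
`r_{m₁ m₂} > r_{ij}` for all distinct `i, j` lying both in `S₁` or both in `S₂`. -/
def InDom {D : ℕ} {n : ℕ} (x : Fin n → Pt D) : BTree n → Prop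
  | leaf _ => True
  | node l r => InDom x l ∧ InDom x r ∧
      (∀ i ∈ l.leaves, ∀ j ∈ l.leaves, i ≠ j →
        dist (x i) (x j) < dist (x l.maxLeaf) (x r.maxLeaf)) ∧
      (∀ i ∈ r.leaves, ∀ j ∈ r.leaves, i ≠ j →
        dist (x i) (x j) < dist (x l.maxLeaf) (x r.maxLeaf))

end BTree

section ConfigurationSpace

open Function

-- Avoiding an extra countable set `K` is what makes the induction on `m` go through.
def configSpace (E : Type*) (m : ℕ) (K : Set E) : Set (Fin m → E) :=
  {x | Injective x ∧ ∀ i, x i ∉ K}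

variable {E : Type*} {m : ℕ} {K : Set E}

theorem mem_configSpace_insert {a : E} {w : Fin m → E} :
    w ∈ configSpace E m (insert a K) ↔ w ∈ configSpace E m K ∧ a ∉ Set.range w := by
  simp only [configSpace, Set.mem_ofPred_eq, Set.mem_insert_iff, not_or, Set.mem_range,
    not_exists, forall_and]
  tauto

theorem cons_mem_configSpace {a : E} {w : Fin m → E} :
    (Fin.cons a w : Fin (m + 1) → E) ∈ configSpace E (m + 1) K ↔
      a ∉ K ∧ w ∈ configSpace E m (insert a K) := by
  rw [mem_configSpace_insert]
  simp only [configSpace, Set.mem_ofPred_eq, Fin.cons_injective_iff, Fin.forall_fin_succ,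
    Fin.cons_zero, Fin.cons_succ]
  tauto

variable [TopologicalSpace E]

theorem JoinedIn.cons_configSpace {c : E} {w w' : Fin m → E}
    (h : JoinedIn (configSpace E m (insert c K)) w w') (hc : c ∉ K) :
    JoinedIn (configSpace E (m + 1) K) (Fin.cons c w) (Fin.cons c w') := by
  refine (h.map (by fun_prop : Continuous fun w : Fin m → E => (Fin.cons c w : Fin (m + 1) → E)))
    |>.mono ?_
  rintro _ ⟨w, hw, rfl⟩
  exact cons_mem_configSpace.2 ⟨hc, hw⟩

variable [AddCommGroup E] [Module ℝ E] [ContinuousAdd E] [ContinuousSMul ℝ E]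

theorem joinedIn_configSpace_cons_cons (hE : 1 < Module.rank ℝ E) (hK : K.Countable)
    {a c : E} {w : Fin m → E} (hw : w ∈ configSpace E m K)
    (ha : a ∉ K ∪ Set.range w) (hc : c ∉ K ∪ Set.range w) :
    JoinedIn (configSpace E (m + 1) K) (Fin.cons a w) (Fin.cons c w) := by
  refine ((hK.union (Set.countable_range w)).isPathConnected_compl_of_one_lt_rank hE
    |>.joinedIn a ha c hc).map
    (by fun_prop : Continuous fun e : E => (Fin.cons e w : Fin (m + 1) → E)) |>.mono ?_
  rintro _ ⟨e, he, rfl⟩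
  rw [Set.mem_compl_iff, Set.mem_union, not_or] at he
  exact cons_mem_configSpace.2 ⟨he.1, mem_configSpace_insert.2 ⟨hw, he.2⟩⟩

theorem isPathConnected_configSpace (hE : 1 < Module.rank ℝ E) (m : ℕ) {K : Set E}
    (hK : K.Countable) : IsPathConnected (configSpace E m K) := by
  induction m generalizing K with
  | zero =>
    have : configSpace E 0 K = Set.univ :=
      Set.eq_univ_of_forall fun x => ⟨injective_of_subsingleton x, fun i => i.elim0⟩
    exact this ▸ convex_univ.isPathConnected Set.univ_nonempty
  | succ m ih =>
    have hcompl {A : Set E} (hA : A.Countable) := hA.isPathConnected_compl_of_one_lt_rank hE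
    rw [isPathConnected_iff]
    constructor
    · obtain ⟨a, ha⟩ := (hcompl hK).nonempty
      obtain ⟨w, hw⟩ := (ih (hK.insert a)).nonempty
      exact ⟨Fin.cons a w, cons_mem_configSpace.2 ⟨ha, hw⟩⟩
    · intro x hx y hy
      rw [← Fin.cons_self_tail x] at hx ⊢
      rw [← Fin.cons_self_tail y] at hy ⊢
      obtain ⟨hxK, hxw⟩ := cons_mem_configSpace.1 hx
      obtain ⟨hxw, hxa⟩ := mem_configSpace_insert.1 hxw
      obtain ⟨hyK, hyw⟩ := cons_mem_configSpace.1 hy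
      obtain ⟨hyw, hya⟩ := mem_configSpace_insert.1 hyw
      -- first move the head of `x` and of `y` to a common fresh point `c`
      obtain ⟨c, hc⟩ := (hcompl ((hK.union (Set.countable_range (Fin.tail x))).union
        (Set.countable_range (Fin.tail y)))).nonempty
      simp only [Set.mem_compl_iff, Set.mem_union, not_or] at hc
      have hmid := ((ih (hK.insert c)).joinedIn _ (mem_configSpace_insert.2 ⟨hxw, hc.1.2⟩) _
        (mem_configSpace_insert.2 ⟨hyw, hc.2⟩)).cons_configSpace hc.1.1
      refine (joinedIn_configSpace_cons_cons hE hK hxw ?_ ?_).trans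
        (hmid.trans (joinedIn_configSpace_cons_cons hE hK hyw ?_ ?_).symm)
      all_goals simp only [Set.mem_union, not_or]; tauto

end ConfigurationSpace

open Function in
theorem isOpen_setOf_injective {ι X : Type*} [Finite ι] [TopologicalSpace X] [T2Space X] :
    IsOpen {x : ι → X | Injective x} := by
  simp only [Injective, ← not_imp_not (a := _ = _), Set.ofPred_forall]
  exact isOpen_iInter_of_finite fun i => isOpen_iInter_of_finite fun j =>
    isOpen_iInter_of_finite fun _ => isOpen_ne_fun (continuous_apply i) (continuous_apply j)

theorem dist_smul_smul_right {E : Type*} [SeminormedAddCommGroup E] [NormedSpace ℝ E]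
    (a b : ℝ) (e : E) : dist (a • e) (b • e) = |a - b| * ‖e‖ := by
  rw [dist_eq_norm, ← sub_smul, norm_smul, Real.norm_eq_abs]

theorem AnalyticAt.clm_apply_of_restrictScalars {𝕜 𝕜' E U W : Type*} [NontriviallyNormedField 𝕜]
    [NontriviallyNormedField 𝕜'] [NormedAlgebra 𝕜 𝕜'] [NormedAddCommGroup E] [NormedSpace 𝕜 E]
    [NormedAddCommGroup U] [NormedSpace 𝕜' U] [NormedSpace 𝕜 U] [IsScalarTower 𝕜 𝕜' U]
    [NormedAddCommGroup W] [NormedSpace 𝕜' W] [NormedSpace 𝕜 W] [IsScalarTower 𝕜 𝕜' W]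
    {f : E → U →L[𝕜'] W} {g : E → U} {x : E}
    (hf : AnalyticAt 𝕜 f x) (hg : AnalyticAt 𝕜 g x) :
    AnalyticAt 𝕜 (fun y => f y (g y)) x :=
  ((ContinuousLinearMap.id 𝕜 (U →L[𝕜] W)).analyticAt_bilinear ((f x).restrictScalars 𝕜, g x)).comp₂
    (((ContinuousLinearMap.restrictScalarsL 𝕜' U W 𝕜 𝕜).analyticAt _).comp hf) hg

section ThreePoint

variable {D : ℕ} {V : Type*} [NormedAddCommGroup V] [NormedSpace ℂ V]

-- `f_T = f_{T'}` for `T = ((1 2) 3)` and `T' = (1 (2 3))`.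
def ThreePointAssoc (C : Pt D → Pt D → (V →L[ℂ] V →L[ℂ] V)) : Prop :=
  ∀ a b c : Pt D, a ≠ b → a ≠ c → b ≠ c → ∀ u w z : V,
    C b c (C a b u w) z = C a c u (C b c w z)

-- `f_T = f_{T'}` for `T = (1 (2 3))` and `T' = (2 (1 3))`.
def ThreePointComm (C : Pt D → Pt D → (V →L[ℂ] V →L[ℂ] V)) : Prop :=
  ∀ a b c : Pt D, a ≠ b → a ≠ c → b ≠ c → ∀ u w z : V,
    C a c u (C b c w z) = C b c w (C a c u z)

end ThreePoint

namespace BTree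

variable {n : ℕ}

theorem maxLeaf_mem (t : BTree n) : t.maxLeaf ∈ t.leaves := by
  induction t with
  | leaf i => exact Finset.mem_singleton_self i
  | node l r ihl ihr =>
    rcases max_choice l.maxLeaf r.maxLeaf with h | h <;>
      simp only [maxLeaf, leaves, h, Finset.mem_union, ihl, ihr, true_or, or_true]

theorem le_maxLeaf {t : BTree n} {i : Fin n} (hi : i ∈ t.leaves) : i ≤ t.maxLeaf := by
  induction t with
  | leaf j => exact (Finset.mem_singleton.1 hi).le
  | node l r ihl ihr =>
    rcases Finset.mem_union.1 hi with h | h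
    · exact (ihl h).trans (le_max_left _ _)
    · exact (ihr h).trans (le_max_right _ _)

theorem maxLeaf_eq_of_leaves_eq {t t' : BTree n} (h : t.leaves = t'.leaves) :
    t.maxLeaf = t'.maxLeaf :=
  le_antisymm (le_maxLeaf (h ▸ t.maxLeaf_mem)) (le_maxLeaf (h ▸ t'.maxLeaf_mem))

theorem maxLeaf_node {l r : BTree n} (h : l.maxLeaf < r.maxLeaf) :
    (node l r).maxLeaf = r.maxLeaf :=
  max_eq_right h.le

def nonMaxLeaves : BTree n → List (Fin n)
  | leaf _ => []
  | node l r => nonMaxLeaves l ++ l.maxLeaf :: nonMaxLeaves r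

theorem mem_nonMaxLeaves {t : BTree n} (ht : t.Valid) {i : Fin n} :
    i ∈ t.nonMaxLeaves ↔ i ∈ t.leaves ∧ i ≠ t.maxLeaf := by
  induction t with
  | leaf j => simp [nonMaxLeaves, leaves, maxLeaf]
  | node l r ihl ihr =>
    obtain ⟨hl, hr, -, hlt⟩ := ht
    simp only [nonMaxLeaves, List.mem_append, List.mem_cons, ihl hl, ihr hr, maxLeaf_node hlt,
      leaves, Finset.mem_union]
    have : i ∈ l.leaves → i ≠ r.maxLeaf := fun h => ((le_maxLeaf h).trans_lt hlt).ne
    constructor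
    · rintro (⟨h, -⟩ | rfl | h)
      · exact ⟨Or.inl h, this h⟩
      · exact ⟨Or.inl l.maxLeaf_mem, hlt.ne⟩
      · exact ⟨Or.inr h.1, h.2⟩
    · rintro ⟨h | h, hne⟩
      · by_cases hi : i = l.maxLeaf
        · exact Or.inr (Or.inl hi)
        · exact Or.inl ⟨h, hi⟩
      · exact Or.inr (Or.inr ⟨h, hne⟩)

theorem nodup_nonMaxLeaves {t : BTree n} (ht : t.Valid) : t.nonMaxLeaves.Nodup := by
  induction t with
  | leaf j => exact List.nodup_nil
  | node l r ihl ihr =>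
    obtain ⟨hl, hr, hdisj, -⟩ := ht
    have hsub_l : ∀ i ∈ l.nonMaxLeaves, i ∈ l.leaves := fun i h => ((mem_nonMaxLeaves hl).1 h).1
    have hsub_r : ∀ i ∈ r.nonMaxLeaves, i ∈ r.leaves := fun i h => ((mem_nonMaxLeaves hr).1 h).1
    refine List.nodup_append.2 ⟨ihl hl, List.nodup_cons.2 ⟨?_, ihr hr⟩, ?_⟩
    · exact fun h => Finset.disjoint_left.1 hdisj l.maxLeaf_mem (hsub_r _ h)
    · intro i hi j hj
      rcases List.mem_cons.1 hj with rfl | hj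
      · exact ((mem_nonMaxLeaves hl).1 hi).2
      · rintro rfl; exact Finset.disjoint_left.1 hdisj (hsub_l i hi) (hsub_r i hj)

section Coherence

variable {D : ℕ} {V : Type*} [NormedAddCommGroup V] [NormedSpace ℂ V]
  {C : Pt D → Pt D → (V →L[ℂ] V →L[ℂ] V)} {x : Fin n → Pt D} (v : Fin n → V)

def rightComb (C : Pt D → Pt D → (V →L[ℂ] V →L[ℂ] V)) (x : Fin n → Pt D) (v : Fin n → V)
    (m : Fin n) (ps : List (Fin n)) (z : V) : V :=
  ps.foldr (fun p w => C (x p) (x m) (v p) w) z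

theorem rightComb_perm (hx : Function.Injective x) (hcomm : ThreePointComm C)
    {m : Fin n} {ps qs : List (Fin n)} (hpq : ps.Perm qs) (hm : m ∉ ps) (z : V) :
    rightComb C x v m ps z = rightComb C x v m qs z := by
  refine hpq.foldr_eq' (fun p hp q hq w => ?_) z
  rcases eq_or_ne p q with rfl | hne
  · rfl
  · exact hcomm _ _ _ (hx.ne hne.symm) (hx.ne (ne_of_mem_of_not_mem hq hm))
      (hx.ne (ne_of_mem_of_not_mem hp hm)) _ _ _

theorem C_rightComb (hx : Function.Injective x) (hassoc : ThreePointAssoc C)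
    {a m : Fin n} (ham : a ≠ m) {ps : List (Fin n)} (hps : ∀ p ∈ ps, p ≠ a ∧ p ≠ m) (u z : V) :
    C (x a) (x m) (rightComb C x v a ps u) z = rightComb C x v m ps (C (x a) (x m) u z) := by
  induction ps with
  | nil => rfl
  | cons p ps ih =>
    obtain ⟨hpa, hpm⟩ := hps p List.mem_cons_self
    simp only [rightComb, List.foldr_cons] at ih ⊢
    rw [hassoc _ _ _ (hx.ne hpa) (hx.ne hpm) (hx.ne ham),
      ih fun q hq => hps q (List.mem_cons_of_mem p hq)]

theorem evalT_eq_rightComb (hx : Function.Injective x) (hassoc : ThreePointAssoc C)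
    {t : BTree n} (ht : t.Valid) :
    evalT C x v t = rightComb C x v t.maxLeaf t.nonMaxLeaves (v t.maxLeaf) := by
  induction t with
  | leaf i => rfl
  | node l r ihl ihr =>
    obtain ⟨hl, hr, -, hlt⟩ := ht
    have hlabels : ∀ p ∈ l.nonMaxLeaves, p ≠ l.maxLeaf ∧ p ≠ r.maxLeaf := fun p hp =>
      have h := (mem_nonMaxLeaves hl).1 hp
      ⟨h.2, ((le_maxLeaf h.1).trans_lt hlt).ne⟩
    rw [evalT, ihl hl, ihr hr, C_rightComb v hx hassoc hlt.ne hlabels, maxLeaf_node hlt]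
    simp only [nonMaxLeaves, rightComb, List.foldr_append, List.foldr_cons]

theorem evalT_eq_of_leaves_eq (hx : Function.Injective x) (hassoc : ThreePointAssoc C)
    (hcomm : ThreePointComm C)
    {t t' : BTree n} (ht : t.Valid) (ht' : t'.Valid) (h : t.leaves = t'.leaves) :
    evalT C x v t = evalT C x v t' := by
  have hmax := maxLeaf_eq_of_leaves_eq h
  have hperm : t.nonMaxLeaves.Perm t'.nonMaxLeaves :=
    (List.perm_ext_iff_of_nodup (nodup_nonMaxLeaves ht) (nodup_nonMaxLeaves ht')).2 fun i => by
      rw [mem_nonMaxLeaves ht, mem_nonMaxLeaves ht', h, hmax]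
  rw [evalT_eq_rightComb v hx hassoc ht, evalT_eq_rightComb v hx hassoc ht', hmax]
  exact rightComb_perm v hx hcomm hperm (fun h' => ((mem_nonMaxLeaves ht).1 h').2 hmax.symm) _

end Coherence

section Geometry

variable {D : ℕ}

theorem isOpen_setOf_inDom (t : BTree n) : IsOpen {x : Fin n → Pt D | InDom x t} := by
  have hpairs (A : Finset (Fin n)) (a b : Fin n) : IsOpen {x : Fin n → Pt D |
      ∀ i ∈ A, ∀ j ∈ A, i ≠ j → dist (x i) (x j) < dist (x a) (x b)} := by
    simp only [Set.ofPred_forall]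
    exact isOpen_biInter_finset fun i _ => isOpen_biInter_finset fun j _ =>
      isOpen_iInter_of_finite fun _ => isOpen_lt (by fun_prop) (by fun_prop)
  induction t with
  | leaf i => simp [InDom]
  | node l r ihl ihr =>
    simp only [InDom, Set.ofPred_and]
    exact ihl.inter (ihr.inter ((hpairs _ _ _).inter (hpairs _ _ _)))

theorem InDom.of_dist_eq_mul {x y : Fin n → Pt D} {c : ℝ} (hc : 0 < c) {t : BTree n}
    (hdist : ∀ i ∈ t.leaves, ∀ j ∈ t.leaves, dist (y i) (y j) = c * dist (x i) (x j))
    (hx : InDom x t) : InDom y t := by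
  induction t with
  | leaf i => trivial
  | node l r ihl ihr =>
    obtain ⟨hl, hr, hll, hrr⟩ := hx
    have hdist_l := fun i hi j hj =>
      hdist i (Finset.mem_union_left _ hi) j (Finset.mem_union_left _ hj)
    have hdist_r := fun i hi j hj =>
      hdist i (Finset.mem_union_right _ hi) j (Finset.mem_union_right _ hj)
    have hroot : dist (y l.maxLeaf) (y r.maxLeaf) = c * dist (x l.maxLeaf) (x r.maxLeaf) :=
      hdist _ (Finset.mem_union_left _ l.maxLeaf_mem) _ (Finset.mem_union_right _ r.maxLeaf_mem)
    refine ⟨ihl hdist_l hl, ihr hdist_r hr, fun i hi j hj hij => ?_, fun i hi j hj hij => ?_⟩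
    · rw [hdist_l i hi j hj, hroot]; exact mul_lt_mul_of_pos_left (hll i hi j hj hij) hc
    · rw [hdist_r i hi j hj, hroot]; exact mul_lt_mul_of_pos_left (hrr i hi j hj hij) hc

theorem InDom.smul_affine {e : Pt D} {f g : Fin n → ℝ} {a c : ℝ} (hc : 0 < c) {t : BTree n}
    (hfg : ∀ i ∈ t.leaves, f i = a + c * g i) (hg : InDom (fun i => g i • e) t) :
    InDom (fun i => f i • e) t :=
  hg.of_dist_eq_mul hc fun i hi j hj => by
    rw [dist_smul_smul_right, dist_smul_smul_right, hfg i hi, hfg j hj, add_sub_add_left_eq_sub,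
      ← mul_sub, abs_mul, abs_of_pos hc, mul_assoc]

theorem exists_injOn_inDom_smul {e : Pt D} (he : e ≠ 0) {t : BTree n} (ht : t.Valid) :
    ∃ f : Fin n → ℝ, Set.InjOn f t.leaves ∧ (∀ i ∈ t.leaves, f i ∈ Set.Icc 0 1) ∧
      InDom (fun i => f i • e) t := by
  induction t with
  | leaf i => exact ⟨0, by simp [leaves], by simp [leaves], trivial⟩
  | node l r ihl ihr =>
    obtain ⟨hl, hr, hdisj, -⟩ := ht
    obtain ⟨g, hg_inj, hg_mem, hg_dom⟩ := ihl hl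
    obtain ⟨h, hh_inj, hh_mem, hh_dom⟩ := ihr hr
    let f : Fin n → ℝ := fun i => if i ∈ l.leaves then 0 + 4⁻¹ * g i else 3 / 4 + 4⁻¹ * h i
    have hfl {i} (hi : i ∈ l.leaves) : f i = 0 + 4⁻¹ * g i := if_pos hi
    have hfr {i} (hi : i ∈ r.leaves) : f i = 3 / 4 + 4⁻¹ * h i :=
      if_neg (Finset.disjoint_right.1 hdisj hi)
    have hl_mem {i} (hi : i ∈ l.leaves) : 0 ≤ f i ∧ f i ≤ 1 / 4 := by
      have := hg_mem i hi; rw [hfl hi]; constructor <;> linarith [this.1, this.2]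
    have hr_mem {i} (hi : i ∈ r.leaves) : 3 / 4 ≤ f i ∧ f i ≤ 1 := by
      have := hh_mem i hi; rw [hfr hi]; constructor <;> linarith [this.1, this.2]
    have hsmall {i j} (hij : (i ∈ l.leaves ∧ j ∈ l.leaves) ∨ (i ∈ r.leaves ∧ j ∈ r.leaves)) :
        dist (f i • e) (f j • e) < dist (f l.maxLeaf • e) (f r.maxLeaf • e) := by
      have hclose : |f i - f j| ≤ 1 / 4 := by
        refine abs_sub_le_iff.2 ?_
        rcases hij with ⟨hi, hj⟩ | ⟨hi, hj⟩
        · constructor <;> linarith [hl_mem hi, hl_mem hj]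
        · constructor <;> linarith [hr_mem hi, hr_mem hj]
      have hfar : 1 / 2 ≤ |f l.maxLeaf - f r.maxLeaf| := by
        rw [abs_sub_comm]
        exact le_abs.2 (Or.inl (by linarith [hl_mem l.maxLeaf_mem, hr_mem r.maxLeaf_mem]))
      rw [dist_smul_smul_right, dist_smul_smul_right]
      exact mul_lt_mul_of_pos_right (by linarith) (norm_pos_iff.2 he)
    refine ⟨f, ?_, ?_, hg_dom.smul_affine (by norm_num) fun i hi => hfl hi,
      hh_dom.smul_affine (by norm_num) fun i hi => hfr hi,
      fun i hi j hj _ => hsmall (.inl ⟨hi, hj⟩), fun i hi j hj _ => hsmall (.inr ⟨hi, hj⟩)⟩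
    · intro i hi j hj hij
      simp only [leaves, Finset.coe_union, Set.mem_union, Finset.mem_coe] at hi hj
      rcases hi with hi | hi <;> rcases hj with hj | hj
      · rw [hfl hi, hfl hj] at hij; exact hg_inj hi hj (by linarith)
      · linarith [hl_mem hi, hr_mem hj]
      · linarith [hr_mem hi, hl_mem hj]
      · rw [hfr hi, hfr hj] at hij; exact hh_inj hi hj (by linarith)
    · intro i hi
      rcases Finset.mem_union.1 hi with hi | hi
      · exact ⟨(hl_mem hi).1, by linarith [(hl_mem hi).2]⟩
      · exact ⟨by linarith [(hr_mem hi).1], (hr_mem hi).2⟩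

theorem exists_injective_inDom (hD : 0 < D) {t : BTree n} (ht : t.Valid)
    (htl : t.leaves = Finset.univ) : ∃ x : Fin n → Pt D, Function.Injective x ∧ InDom x t := by
  have he : EuclideanSpace.single (⟨0, hD⟩ : Fin D) (1 : ℝ) ≠ 0 := by simp
  obtain ⟨f, hf, -, hdom⟩ := exists_injOn_inDom_smul he ht
  exact ⟨_, fun i j hij => hf (by simp [htl]) (by simp [htl]) (smul_left_injective ℝ he hij), hdom⟩

end Geometry

section Analytic

variable {D : ℕ} {V : Type*} [NormedAddCommGroup V] [NormedSpace ℂ V]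
  {C : Pt D → Pt D → (V →L[ℂ] V →L[ℂ] V)}

theorem analyticAt_evalT (hCa : AnalyticOnNhd ℝ (fun p : Pt D × Pt D => C p.1 p.2) {p | p.1 ≠ p.2})
    (v : Fin n → V) {t : BTree n} (ht : t.Valid) {x : Fin n → Pt D} (hx : Function.Injective x) :
    AnalyticAt ℝ (fun y => evalT C y v t) x := by
  induction t with
  | leaf i => exact analyticAt_const
  | node l r ihl ihr =>
    obtain ⟨hl, hr, -, hlt⟩ := ht
    have hproj (i : Fin n) : AnalyticAt ℝ (fun y : Fin n → Pt D => y i) x :=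
      (ContinuousLinearMap.proj (R := ℝ) (φ := fun _ : Fin n => Pt D) i).analyticAt x
    have hC : AnalyticAt ℝ (fun y : Fin n → Pt D => C (y l.maxLeaf) (y r.maxLeaf)) x :=
      (hCa _ (hx.ne hlt.ne)).comp₂ (hproj _) (hproj _)
    exact (hC.clm_apply_of_restrictScalars (ihl hl)).clm_apply_of_restrictScalars (ihr hr)

theorem eq_evalT_of_analyticOnNhd (hD : 2 ≤ D)
    (hCa : AnalyticOnNhd ℝ (fun p : Pt D × Pt D => C p.1 p.2) {p | p.1 ≠ p.2})
    {t : BTree n} (ht : t.Valid) (htl : t.leaves = Finset.univ) (v : Fin n → V)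
    {G : (Fin n → Pt D) → V} (hG : AnalyticOnNhd ℝ G {x | Function.Injective x})
    (hGt : ∀ x, Function.Injective x → InDom x t → G x = evalT C x v t)
    {x : Fin n → Pt D} (hx : Function.Injective x) : G x = evalT C x v t := by
  have hconn : IsPreconnected {x : Fin n → Pt D | Function.Injective x} := by
    have hrank : 1 < Module.rank ℝ (Pt D) := by
      rw [← Module.finrank_eq_rank, finrank_euclideanSpace_fin]
      exact_mod_cast hD
    simpa [configSpace] using
      (isPathConnected_configSpace hrank n Set.countable_empty).isConnected.isPreconnected
  obtain ⟨x₀, hx₀, hx₀t⟩ := exists_injective_inDom (D := D) (by omega) ht htl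
  have hnhds : {y | Function.Injective y ∧ InDom y t} ∈ nhds x₀ :=
    (isOpen_setOf_injective.inter (isOpen_setOf_inDom t)).mem_nhds ⟨hx₀, hx₀t⟩
  exact hG.eqOn_of_preconnected_of_eventuallyEq (fun y hy => analyticAt_evalT hCa v ht hy) hconn
    hx₀ (Filter.mem_of_superset hnhds fun y hy => hGt y hy.1 hy.2) hx

end Analytic

theorem threePoint_of_evalT_eq {D : ℕ} {V : Type*} [NormedAddCommGroup V] [NormedSpace ℂ V]
    {C : Pt D → Pt D → (V →L[ℂ] V →L[ℂ] V)}
    (h : ∀ t t' : BTree 3, t.Valid → t.leaves = Finset.univ → t'.Valid →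
      t'.leaves = Finset.univ → ∀ x : Fin 3 → Pt D, Function.Injective x →
        ∀ v, evalT C x v t = evalT C x v t') :
    ThreePointAssoc C ∧ ThreePointComm C := by
  have hinj {a b c : Pt D} (hab : a ≠ b) (hac : a ≠ c) (hbc : b ≠ c) :
      Function.Injective ![a, b, c] := by
    simp only [Matrix.vecCons, Fin.cons_injective_iff]
    simp [hab, hac, hbc, Function.Injective, eq_iff_true_of_subsingleton]
  constructor
  · intro a b c hab hac hbc u w z
    exact h (node (node (leaf 0) (leaf 1)) (leaf 2)) (node (leaf 0) (node (leaf 1) (leaf 2)))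
      (by simp [Valid, leaves, maxLeaf]) (by decide) (by simp [Valid, leaves, maxLeaf])
      (by decide) _ (hinj hab hac hbc) ![u, w, z]
  · intro a b c hab hac hbc u w z
    exact h (node (leaf 0) (node (leaf 1) (leaf 2))) (node (leaf 1) (node (leaf 0) (leaf 2)))
      (by simp [Valid, leaves, maxLeaf]) (by decide) (by simp [Valid, leaves, maxLeaf])
      (by decide) _ (hinj hab hac hbc) ![u, w, z]

end BTree

theorem stmt8_general {D : ℕ} (hD : 2 ≤ D) {V : Type*} [NormedAddCommGroup V] [NormedSpace ℂ V]
    (C : Pt D → Pt D → (V →L[ℂ] V →L[ℂ] V))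
    (hCa : AnalyticOnNhd ℝ (fun p : Pt D × Pt D => C p.1 p.2) {p | p.1 ≠ p.2})
    (F : (m : ℕ) → BTree m → (Fin m → Pt D) → ContinuousMultilinearMap ℂ (fun _ : Fin m => V) V)
    (hFa : ∀ m, 2 ≤ m → ∀ t : BTree m, t.Valid → t.leaves = Finset.univ →
      AnalyticOnNhd ℝ (F m t) {x | Function.Injective x})
    (hFagree : ∀ m, 2 ≤ m → ∀ t : BTree m, t.Valid → t.leaves = Finset.univ →
      ∀ x : Fin m → Pt D, Function.Injective x → BTree.InDom x t →
        ∀ v : Fin m → V, F m t x v = BTree.evalT C x v t)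
    (h3 : ∀ t t' : BTree 3, t.Valid → t.leaves = Finset.univ →
      t'.Valid → t'.leaves = Finset.univ →
      ∀ x : Fin 3 → Pt D, Function.Injective x → F 3 t x = F 3 t' x)
    (n : ℕ) (hn : 2 ≤ n) (t t' : BTree n)
    (ht : t.Valid) (htl : t.leaves = Finset.univ)
    (ht' : t'.Valid) (htl' : t'.leaves = Finset.univ)
    (x : Fin n → Pt D) (hx : Function.Injective x) :
    F n t x = F n t' x := by
  have hF : ∀ m, 2 ≤ m → ∀ t : BTree m, t.Valid → t.leaves = Finset.univ →
      ∀ x : Fin m → Pt D, Function.Injective x → ∀ v, F m t x v = BTree.evalT C x v t :=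
    fun m hm t ht htl x hx v => BTree.eq_evalT_of_analyticOnNhd hD hCa ht htl v
      (G := fun y => F m t y v)
      (fun y hy => ((ContinuousMultilinearMap.apply ℂ _ V v).restrictScalars ℝ).analyticAt _
        |>.comp (hFa m hm t ht htl y hy))
      (hFagree m hm t ht htl · · · v) hx
  obtain ⟨hassoc, hcomm⟩ := BTree.threePoint_of_evalT_eq fun t t' ht htl ht' htl' y hy v => by
    rw [← hF 3 (by norm_num) t ht htl y hy, ← hF 3 (by norm_num) t' ht' htl' y hy,
      h3 t t' ht htl ht' htl' y hy]
  ext v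
  rw [hF n hn t ht htl x hx, hF n hn t' ht' htl' x hx]
  exact BTree.evalT_eq_of_leaves_eq v hx hassoc hcomm ht ht' (htl.trans htl'.symm)

/-- Coherence Theorem: if each tree expression `f_T` (defined on `D[T]` from
the 2-point coefficient `C`) extends to a real-analytic function `F_T` on all of `M_m`, and
the three extensions coincide for the three binary trees on `{1,2,3}`, then the extensions
coincide for any two binary trees on `{1, …, n}`, for every `n ≥ 2`. -/
theorem stmt8 {D : ℕ} (hD : 2 ≤ D) {V : Type*} [NormedAddCommGroup V] [NormedSpace ℂ V]
    [CompleteSpace V]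
    (C : Pt D → Pt D → (V →L[ℂ] V →L[ℂ] V))
    (hCa : AnalyticOnNhd ℝ (fun p : Pt D × Pt D => C p.1 p.2) {p | p.1 ≠ p.2})
    (F : (m : ℕ) → BTree m → (Fin m → Pt D) → ContinuousMultilinearMap ℂ (fun _ : Fin m => V) V)
    (hFa : ∀ m, 2 ≤ m → ∀ t : BTree m, t.Valid → t.leaves = Finset.univ →
      AnalyticOnNhd ℝ (F m t) {x | Function.Injective x})
    (hFagree : ∀ m, 2 ≤ m → ∀ t : BTree m, t.Valid → t.leaves = Finset.univ →
      ∀ x : Fin m → Pt D, Function.Injective x → BTree.InDom x t →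
        ∀ v : Fin m → V, F m t x v = BTree.evalT C x v t)
    (h3 : ∀ t t' : BTree 3, t.Valid → t.leaves = Finset.univ →
      t'.Valid → t'.leaves = Finset.univ →
      ∀ x : Fin 3 → Pt D, Function.Injective x → F 3 t x = F 3 t' x)
    (n : ℕ) (hn : 2 ≤ n) (t t' : BTree n)
    (ht : t.Valid) (htl : t.leaves = Finset.univ)
    (ht' : t'.Valid) (htl' : t'.leaves = Finset.univ)
    (x : Fin n → Pt D) (hx : Function.Injective x) :
    F n t x = F n t' x :=
  stmt8_general hD C hCa F hFa hFagree h3 n hn t t' ht htl ht' htl' x hx
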